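/- arXiv:2501.10921 — 2 statements merged into one kernel-verified Lean document; each statement's English description precedes it below -/
import Mathlib

section
/- Let Γ be a semicomplete multipartite commutative weakly distance-regular digraph with T={3,4}, where T={q : (1,q−1)∈∂̃(Γ)}. Then ∂̃(Γ)⊆{(0,0),(1,2),(2,1),(1,3),(3,1),(2,2),(3,3)}. -/
open Set Matrix

namespace Paper

variable {V : Type*} {W : Type*}

/-- There is a directed walk of length `n` from `x` to `y` in the digraph with arc relation `A`. -/
def HasPathOfLength (A : V → V → Prop) (x y : V) (n : ℕ) : Prop :=
  ∃ p : ℕ → V, p 0 = x ∧ p n = y ∧ ∀ i < n, A (p i) (p (i + 1))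

/-- A digraph is strongly connected if there is a directed path between any two vertices. -/
def IsStronglyConnected (A : V → V → Prop) : Prop :=
  ∀ x y, ∃ n, HasPathOfLength A x y n

/-- The distance `∂(x,y)`: the length of a shortest directed path from `x` to `y`. -/
noncomputable def ddist (A : V → V → Prop) (x y : V) : ℕ :=
  sInf {n | HasPathOfLength A x y n}

/-- The two-way distance `∂̃(x,y) = (∂(x,y), ∂(y,x))`. -/
noncomputable def tdist (A : V → V → Prop) (x y : V) : ℕ × ℕ :=
  (ddist A x y, ddist A y x)

/-- The two-way distance set `∂̃(Γ)`. -/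
def tdistSet (A : V → V → Prop) : Set (ℕ × ℕ) :=
  {d | ∃ x y, tdist A x y = d}

/-- The number `p_{ĩ,j̃}(x,y) = |{z : ∂̃(x,z) = ĩ, ∂̃(z,y) = j̃}|`. -/
noncomputable def pnum (A : V → V → Prop) (i j : ℕ × ℕ) (x y : V) : ℕ :=
  {z | tdist A x z = i ∧ tdist A z y = j}.ncard

/-- A weakly distance-regular digraph. -/
def IsWDRD (A : V → V → Prop) : Prop :=
  IsStronglyConnected A ∧
  (∃ d ∈ tdistSet A, d.1 ≠ d.2) ∧
  ∀ i j : ℕ × ℕ, ∀ x y x' y' : V,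
    tdist A x y = tdist A x' y' → pnum A i j x y = pnum A i j x' y'

/-- Commutativity of the attached scheme: `p_{ĩ,j̃}^{h̃} = p_{j̃,ĩ}^{h̃}`. -/
def IsCommutativeDigraph (A : V → V → Prop) : Prop :=
  ∀ i j : ℕ × ℕ, ∀ x y : V, pnum A i j x y = pnum A j i x y

/-- A commutative weakly distance-regular digraph. -/
def IsCWDRD (A : V → V → Prop) : Prop :=
  IsWDRD A ∧ IsCommutativeDigraph A

/-- `A` is semicomplete multipartite with partition given by `f` (parts are the fibres). -/
def IsSemicompleteMultipartiteWith (A : V → V → Prop) {m : ℕ} (f : V → Fin m) : Prop :=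
  (∀ x, ¬ A x x) ∧ (∀ i, 2 ≤ {x | f x = i}.ncard) ∧
  ∀ x y : V, x ≠ y → ((A x y ∨ A y x) ↔ f x ≠ f y)

/-- A semicomplete multipartite digraph: the vertex set is partitioned into `m ≥ 2` partite
sets, each of size at least `2`, and two distinct vertices are joined by an arc in at least
one direction iff they lie in different partite sets. -/
def IsSemicompleteMultipartite (A : V → V → Prop) : Prop :=
  ∃ m : ℕ, 2 ≤ m ∧ ∃ f : V → Fin m, IsSemicompleteMultipartiteWith A f

/-- A semicomplete digraph: any two distinct vertices are joined by an arc in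
at least one direction. -/
def IsSemicomplete (A : V → V → Prop) : Prop :=
  (∀ x, ¬ A x x) ∧ ∀ x y : V, x ≠ y → A x y ∨ A y x

/-- A circuit of length `n`: a sequence `w₀,…,w_{n-1}` with consecutive arcs and an arc
from `w_{n-1}` back to `w₀`. -/
def HasCircuitOfLength (A : V → V → Prop) (n : ℕ) : Prop :=
  ∃ p : ℕ → V, p n = p 0 ∧ ∀ i < n, A (p i) (p (i + 1))

/-- The girth: the length of a shortest circuit. -/
noncomputable def girth (A : V → V → Prop) : ℕ :=
  sInf {n | 1 ≤ n ∧ HasCircuitOfLength A n}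

/-- Lexicographic product of digraphs. -/
def lexProd (A : V → V → Prop) (B : W → W → Prop) : V × W → V × W → Prop :=
  fun u v => A u.1 v.1 ∨ (u.1 = v.1 ∧ B u.2 v.2)

/-- The `n`-coclique extension of a digraph: `A ∘ K̄ₙ`. -/
def cocliqueExt (A : V → V → Prop) (n : ℕ) : V × Fin n → V × Fin n → Prop :=
  lexProd A (fun _ _ : Fin n => False)

/-- Isomorphism of digraphs. -/
def Iso (A : V → V → Prop) (B : W → W → Prop) : Prop :=
  ∃ e : V ≃ W, ∀ x y : V, A x y ↔ B (e x) (e y)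

/-- An `(m,r)`-team semicomplete multipartite digraph with partite sets the fibres of `f`:
`m ≥ 2` parts, each of size `r ≥ 2`. -/
def IsTeamSMD (A : V → V → Prop) {m : ℕ} (f : V → Fin m) (r : ℕ) : Prop :=
  2 ≤ m ∧ 2 ≤ r ∧ (∀ x, ¬ A x x) ∧ (∀ i : Fin m, {x | f x = i}.ncard = r) ∧
  ∀ x y : V, x ≠ y → ((A x y ∨ A y x) ↔ f x ≠ f y)

/-- Regular of valency `k`: every vertex has exactly `k` out-neighbours and `k`
in-neighbours. -/
def IsRegularOfValency (A : V → V → Prop) (k : ℕ) : Prop :=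
  ∀ x : V, {y | A x y}.ncard = k ∧ {y | A y x}.ncard = k

open Classical in
/-- Adjacency matrix of the symmetric part `EΓ`. -/
noncomputable def matE (A : V → V → Prop) : Matrix V V ℤ :=
  Matrix.of fun x y => if A x y ∧ A y x then 1 else 0

open Classical in
/-- Adjacency matrix of the asymmetric part `A⃗Γ`. -/
noncomputable def matAr (A : V → V → Prop) : Matrix V V ℤ :=
  Matrix.of fun x y => if A x y ∧ ¬ A y x then 1 else 0

open Classical in
/-- Adjacency matrix of a digraph. -/
noncomputable def matAdj (A : V → V → Prop) : Matrix V V ℤ :=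
  Matrix.of fun x y => if A x y then 1 else 0

/-- The all-ones matrix `J`. -/
def matJ (V : Type*) : Matrix V V ℤ := Matrix.of fun _ _ => 1

open Classical in
/-- The matrix equations in the definition of a doubly regular team semicomplete multipartite
digraph, with constants `t, αᵢ, βᵢ, γᵢ, ηᵢ` (`A₀ = matE A`, `A₁ = matAr A`). -/
def DRConstEq [Fintype V] (A : V → V → Prop) (t : ℤ) (α β γ η : ℕ → ℤ) : Prop :=
  ∀ i j : Fin 2,
    ![matE A, matAr A] i * ![matE A, matAr A] j =
      (if (i : ℕ) + (j : ℕ) = 0 then t else 0) • (1 : Matrix V V ℤ) +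
      α ((i : ℕ) + (j : ℕ)) • matAr A +
      β ((i : ℕ) + (j : ℕ)) • (matAr A)ᵀ +
      γ ((i : ℕ) + (j : ℕ)) • matE A +
      η ((i : ℕ) + (j : ℕ)) • (matJ V - 1 - matAr A - (matAr A)ᵀ - matE A)

/-- A doubly regular `(m,r)`-team semicomplete multipartite digraph. -/
def IsDoublyRegularTeamSMD [Fintype V] (A : V → V → Prop) {m : ℕ} (f : V → Fin m)
    (r : ℕ) : Prop :=
  IsTeamSMD A f r ∧ (∃ k, IsRegularOfValency A k) ∧
  ∃ t α β γ η, DRConstEq A t α β γ η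

/-- `A_j⁺(x)`: out-neighbours of `x` in the part `j` via single arcs. -/
def Aplus (A : V → V → Prop) {m : ℕ} (f : V → Fin m) (j : Fin m) (x : V) : Set V :=
  {y | f y = j ∧ A x y ∧ ¬ A y x}

/-- `E_j(x)`: neighbours of `x` in the part `j` via edges (pairs of opposite arcs). -/
def Epart (A : V → V → Prop) {m : ℕ} (f : V → Fin m) (j : Fin m) (x : V) : Set V :=
  {y | f y = j ∧ A x y ∧ A y x}

/-- Type I: `β₁+β₂-α₁-α₂ = r` and the digraph is an `r`-coclique extension of a
semicomplete digraph. -/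
def TypeI (A : V → V → Prop) (r : ℕ) (α β : ℕ → ℤ) : Prop :=
  β 1 + β 2 - α 1 - α 2 = (r : ℤ) ∧
  ∃ (N : ℕ) (S : Fin N → Fin N → Prop),
    1 ≤ N ∧ IsSemicomplete S ∧ Iso A (cocliqueExt S r)

/-- Type II: `β₁+β₂-α₁-α₂ = 0` and `c_{ij} = c_{ji} = (r - e_{ij})/2` for all pairs `i ≠ j`. -/
def TypeII (A : V → V → Prop) {m : ℕ} (f : V → Fin m) (r : ℕ) (α β : ℕ → ℤ) : Prop :=
  β 1 + β 2 - α 1 - α 2 = 0 ∧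
  ∀ i j : Fin m, i ≠ j → ∃ c e : ℕ,
    (∀ x, f x = i → (Aplus A f j x).ncard = c ∧ (Epart A f j x).ncard = e) ∧
    (∀ y, f y = j → (Aplus A f i y).ncard = c) ∧
    c + c + e = r

/-- Condition (ii) of Type III for the ordered pair `(i,j)`: `V_i` splits as
`V_i' ∪ V_i''` with `(V_i' × V_j) ∪ (V_j × V_i'') ⊆ A⃗Γ`. -/
def TypeIIIsplitB (A : V → V → Prop) {m : ℕ} (f : V → Fin m) (i j : Fin m) : Prop :=
  ∃ S : Set V, S ⊆ {x | f x = i} ∧ S.Nonempty ∧ ({x | f x = i} \ S).Nonempty ∧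
    (∀ x ∈ S, ∀ y : V, f y = j → A x y ∧ ¬ A y x) ∧
    (∀ y : V, f y = j → ∀ x ∈ {x | f x = i} \ S, A y x ∧ ¬ A x y)

/-- Condition (iii) of Type III for the pair `(i,j)`. -/
def TypeIIIsplitC (A : V → V → Prop) {m : ℕ} (f : V → Fin m) (i j : Fin m) : Prop :=
  ∃ S T' : Set V,
    S ⊆ {x | f x = i} ∧ S.Nonempty ∧ ({x | f x = i} \ S).Nonempty ∧
    T' ⊆ {y | f y = j} ∧ T'.Nonempty ∧ ({y | f y = j} \ T').Nonempty ∧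
    (∀ x ∈ S, ∀ y ∈ T', A x y ∧ A y x) ∧
    (∀ x ∈ {x | f x = i} \ S, ∀ y ∈ {y | f y = j} \ T', A x y ∧ A y x) ∧
    (∀ x ∈ S, ∀ y ∈ {y | f y = j} \ T', A x y ∧ ¬ A y x) ∧
    (∀ y ∈ T', ∀ x ∈ {x | f x = i} \ S, A y x ∧ ¬ A x y)

/-- Type III. -/
def TypeIII (A : V → V → Prop) {m : ℕ} (f : V → Fin m) (r : ℕ) (α β : ℕ → ℤ) : Prop :=
  2 * (β 1 + β 2 - α 1 - α 2) = (r : ℤ) ∧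
  ∀ i j : Fin m, i ≠ j →
    (∀ x y : V, f x = i → f y = j → A x y ∧ A y x) ∨
    (TypeIIIsplitB A f i j ∨ TypeIIIsplitB A f j i) ∨
    TypeIIIsplitC A f i j

/-- An `(m,r)`-team tournament: an `(m,r)`-team semicomplete multipartite digraph with
no pair of opposite arcs. -/
def IsTeamTournament (A : V → V → Prop) {m : ℕ} (f : V → Fin m) (r : ℕ) : Prop :=
  IsTeamSMD A f r ∧ ∀ x y : V, ¬ (A x y ∧ A y x)

open Classical in
/-- A doubly regular `(m,r)`-team tournament with parameters `(α,β,γ)`: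
`A² = αA + βAᵀ + γ(J - I - A - Aᵀ)`. -/
def IsDRTeamTournament [Fintype V] (A : V → V → Prop) {m : ℕ} (f : V → Fin m) (r : ℕ)
    (α β γ : ℤ) : Prop :=
  IsTeamTournament A f r ∧ (∃ k, IsRegularOfValency A k) ∧
  matAdj A * matAdj A =
    α • matAdj A + β • (matAdj A)ᵀ + γ • (matJ V - 1 - matAdj A - (matAdj A)ᵀ)

/-- Type II of a doubly regular team tournament: `β - α = 0`, `r` even, and
`|N⁺(x) ∩ V_i| = r/2` for every partite set `V_i` and vertex `x ∉ V_i`. -/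
def TournamentTypeII (A : V → V → Prop) {m : ℕ} (f : V → Fin m) (r : ℕ) (α β : ℤ) : Prop :=
  β = α ∧ Even r ∧ ∀ (i : Fin m) (x : V), f x ≠ i → 2 * {y | f y = i ∧ A x y}.ncard = r

/-- The Cayley digraph `Cay(ℤ₆, {1,2})`. -/
def Cay6 : ZMod 6 → ZMod 6 → Prop := fun x y => y - x = 1 ∨ y - x = 2

/-- The directed cycle `C₄`. -/
def C4 : ZMod 4 → ZMod 4 → Prop := fun x y => y = x + 1

section Proof17

variable {A : V → V → Prop}

private lemma hpl_zero {x y : V} : HasPathOfLength A x y 0 ↔ x = y := by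
  constructor
  · rintro ⟨p, h0, hn, -⟩; rw [← h0, hn]
  · rintro rfl; exact ⟨fun _ => x, rfl, rfl, fun i h => absurd h (Nat.not_lt_zero i)⟩

private lemma hpl_one {x y : V} : HasPathOfLength A x y 1 ↔ A x y := by
  constructor
  · rintro ⟨p, h0, hn, h⟩
    have := h 0 one_pos
    rwa [h0, hn] at this
  · intro h
    refine ⟨fun i => if i = 0 then x else y, by simp, by simp, ?_⟩
    intro i hi
    interval_cases i
    simpa using h

private lemma hpl_concat {x z y : V} {m n : ℕ}
    (h1 : HasPathOfLength A x z m) (h2 : HasPathOfLength A z y n) :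
    HasPathOfLength A x y (m + n) := by
  obtain ⟨p, hp0, hpm, hp⟩ := h1
  obtain ⟨q, hq0, hqn, hq⟩ := h2
  refine ⟨fun i => if i ≤ m then p i else q (i - m), by simp [hp0], ?_, ?_⟩
  · by_cases hn : n = 0
    · subst hn
      simp only [Nat.add_zero, le_refl, if_pos]
      rw [hpm, ← hq0]
      simpa using hqn
    · have h' : ¬ (m + n ≤ m) := by omega
      simp only [if_neg h']
      have : m + n - m = n := by omega
      rw [this, hqn]
  · intro i hi
    rcases lt_trichotomy i m with hlt | heq | hgt
    · have h1' : i ≤ m := hlt.le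
      have h2' : i + 1 ≤ m := hlt
      simp only [if_pos h1', if_pos h2']
      exact hp i hlt
    · subst heq
      have hn : 0 < n := by omega
      have hni : ¬ (i + 1 ≤ i) := by omega
      simp only [if_pos le_rfl, if_neg hni]
      have h1 : i + 1 - i = 1 := by omega
      rw [h1, hpm, ← hq0]
      exact hq 0 hn
    · have h1' : ¬ (i ≤ m) := by omega
      have h2' : ¬ (i + 1 ≤ m) := by omega
      simp only [if_neg h1', if_neg h2']
      have h3 : i + 1 - m = (i - m) + 1 := by omega
      rw [h3]
      exact hq (i - m) (by omega)

private lemma ddist_le {x y : V} {n : ℕ} (h : HasPathOfLength A x y n) :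
    ddist A x y ≤ n := Nat.sInf_le h

private lemma ddist_self (x : V) : ddist A x x = 0 :=
  Nat.le_zero.mp (ddist_le (hpl_zero.mpr rfl))

private lemma tdist_self (x : V) : tdist A x x = (0, 0) := by
  simp [tdist, ddist_self]

private lemma ddist_path (hsc : IsStronglyConnected A) (x y : V) :
    HasPathOfLength A x y (ddist A x y) := by
  obtain ⟨n, hn⟩ := hsc x y
  have hne : ({k | HasPathOfLength A x y k} : Set ℕ).Nonempty := ⟨n, hn⟩
  exact Nat.sInf_mem hne

private lemma ddist_eq_zero (hsc : IsStronglyConnected A) {x y : V}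
    (h : ddist A x y = 0) : x = y := by
  have := ddist_path hsc x y
  rw [h] at this
  exact hpl_zero.mp this

private lemma ddist_triangle (hsc : IsStronglyConnected A) (x z y : V) :
    ddist A x y ≤ ddist A x z + ddist A z y :=
  ddist_le (hpl_concat (ddist_path hsc x z) (ddist_path hsc z y))

private lemma ddist_one_iff (hsc : IsStronglyConnected A) (hirr : ∀ v, ¬ A v v)
    {x y : V} : ddist A x y = 1 ↔ A x y := by
  constructor
  · intro h
    have := ddist_path hsc x y
    rw [h] at this
    exact hpl_one.mp this
  · intro h
    refine le_antisymm (ddist_le (hpl_one.mpr h)) ?_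
    rcases Nat.eq_zero_or_pos (ddist A x y) with h0 | h1
    · have := ddist_eq_zero hsc h0
      subst this
      exact absurd h (hirr x)
    · exact h1

private lemma ddist_two (hsc : IsStronglyConnected A) {x y : V}
    (h : ddist A x y = 2) : ∃ w, A x w ∧ A w y := by
  have hp := ddist_path hsc x y
  rw [h] at hp
  obtain ⟨p, h0, hn, harc⟩ := hp
  refine ⟨p 1, ?_, ?_⟩
  · have := harc 0 (by norm_num); rwa [h0] at this
  · have := harc 1 (by norm_num); rwa [hn] at this

end Proof17

/-- if `T = {3,4}` then
`∂̃(Γ) ⊆ {(0,0),(1,2),(2,1),(1,3),(3,1),(2,2),(3,3)}`. -/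
theorem statement_17 {V : Type*} [Fintype V] [Nonempty V] (A : V → V → Prop)
    (hsm : IsSemicompleteMultipartite A) (h : IsCWDRD A)
    (hT : {q : ℕ | (1, q - 1) ∈ tdistSet A} = {3, 4}) :
    tdistSet A ⊆
      {((0 : ℕ), (0 : ℕ)), (1, 2), (2, 1), (1, 3), (3, 1), (2, 2), (3, 3)} := by
  obtain ⟨⟨hsc, -, hreg⟩, -⟩ := h
  obtain ⟨m, -, f, hirr, -, hadj⟩ := hsm
  -- every arc gives distance 1
  have F1 : ∀ x y : V, A x y → ddist A x y = 1 := fun x y hxy =>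
    (ddist_one_iff hsc hirr).mpr hxy
  -- return distance of an arc is 2 or 3
  have F2 : ∀ x y : V, A x y → ddist A y x = 2 ∨ ddist A y x = 3 := by
    intro x y hxy
    have hmem : (1, ddist A y x) ∈ tdistSet A := ⟨x, y, by simp [tdist, F1 x y hxy]⟩
    have h2 : (ddist A y x + 1) ∈ {q : ℕ | (1, q - 1) ∈ tdistSet A} := by
      simpa using hmem
    rw [hT] at h2
    simp only [Set.mem_insert_iff, Set.mem_singleton_iff] at h2
    omega
  -- no digons
  have F3 : ∀ x y : V, A x y → ¬ A y x := by
    intro x y hxy hyx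
    have hmem : (1, (1 : ℕ)) ∈ tdistSet A := ⟨x, y, by simp [tdist, F1 x y hxy, F1 y x hyx]⟩
    have h2 : (2 : ℕ) ∈ {q : ℕ | (1, q - 1) ∈ tdistSet A} := by simpa using hmem
    rw [hT] at h2
    simp at h2
  -- (1,2) is realized
  have F4 : (1, (2 : ℕ)) ∈ tdistSet A := by
    have h3 : (3 : ℕ) ∈ {q : ℕ | (1, q - 1) ∈ tdistSet A} := by rw [hT]; simp
    simpa using h3
  -- tdist set witnesses transfer: sets used in pnum
  have hset : ∀ (v : V) (q : ℕ),
      {z : V | tdist A v z = (1, q) ∧ tdist A z v = (q, 1)} = {z : V | tdist A v z = (1, q)} := by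
    intro v q
    ext z
    simp only [Set.mem_setOf_eq, and_iff_left_iff_imp]
    intro hz
    have h1 : ddist A v z = 1 := congrArg Prod.fst hz
    have h2 : ddist A z v = q := congrArg Prod.snd hz
    simp [tdist, h1, h2]
  -- the number of (1,q)-out-neighbours is the same for all vertices
  have F6 : ∀ (v v' : V) (q : ℕ),
      {z : V | tdist A v z = (1, q)}.ncard = {z : V | tdist A v' z = (1, q)}.ncard := by
    intro v v' q
    have := hreg (1, q) (q, 1) v v v' v' (by rw [tdist_self, tdist_self])
    unfold pnum at this
    rwa [hset, hset] at this
  -- every vertex has a (1,2)-out-neighbour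
  have F5 : ∀ v : V, ∃ z : V, tdist A v z = (1, 2) := by
    intro v
    obtain ⟨u, w, huw⟩ := F4
    have hpos : 0 < {z : V | tdist A u z = (1, 2)}.ncard :=
      (Set.ncard_pos (Set.toFinite _)).mpr ⟨w, huw⟩
    rw [F6 u v 2] at hpos
    obtain ⟨z, hz⟩ := (Set.ncard_pos (Set.toFinite _)).mp hpos
    exact ⟨z, hz⟩
  -- out-neighbourhoods all have the same cardinality
  have Fsplit : ∀ v : V, {z : V | A v z} =
      {z : V | tdist A v z = (1, 2)} ∪ {z : V | tdist A v z = (1, 3)} := by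
    intro v
    ext z
    simp only [Set.mem_setOf_eq, Set.mem_union]
    constructor
    · intro hvz
      rcases F2 v z hvz with h2 | h3
      · left; simp [tdist, F1 v z hvz, h2]
      · right; simp [tdist, F1 v z hvz, h3]
    · rintro (hz | hz)
      all_goals
        exact (ddist_one_iff hsc hirr).mp (congrArg Prod.fst hz)
  have Fcard : ∀ v v' : V, {z : V | A v z}.ncard = {z : V | A v' z}.ncard := by
    intro v v'
    have hdisj : ∀ w : V, Disjoint {z : V | tdist A w z = (1, 2)} {z : V | tdist A w z = (1, 3)} := by
      intro w
      rw [Set.disjoint_left]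
      intro z h2 h3
      simp only [Set.mem_setOf_eq] at h2 h3
      rw [h2] at h3
      simp at h3
    rw [Fsplit v, Fsplit v',
      Set.ncard_union_eq (hdisj v) (Set.toFinite _) (Set.toFinite _),
      Set.ncard_union_eq (hdisj v') (Set.toFinite _) (Set.toFinite _),
      F6 v v' 2, F6 v v' 3]
  -- key: non-adjacent pair with ∂(v,u) ≥ 3 implies N⁺(v) ⊆ N⁺(u)
  have key : ∀ u v : V, f u = f v → 3 ≤ ddist A v u → ∀ z : V, A v z → A u z := by
    intro u v hf h3 z hvz
    have hfvz : f v ≠ f z := by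
      by_cases hzv : v = z
      · exact absurd (hzv ▸ hvz) (hirr v)
      · exact (hadj v z hzv).mp (Or.inl hvz)
    have hfuz : f u ≠ f z := hf ▸ hfvz
    have huz : u ≠ z := fun h => hfuz (h ▸ rfl)
    rcases (hadj u z huz).mpr hfuz with h1 | h1
    · exact h1
    · exfalso
      have : ddist A v u ≤ ddist A v z + ddist A z u := ddist_triangle hsc v z u
      rw [F1 v z hvz, F1 z u h1] at this
      omega
  -- from N⁺ inclusion to equality
  have keyeq : ∀ u v : V, f u = f v → 3 ≤ ddist A v u →
      {z : V | A v z} = {z : V | A u z} := by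
    intro u v hf h3
    have hsub : {z : V | A v z} ⊆ {z : V | A u z} := fun z hz => key u v hf h3 z hz
    exact Set.eq_of_subset_of_ncard_le hsub (le_of_eq (Fcard u v)) (Set.toFinite _)
  -- main argument
  rintro d ⟨x, y, rfl⟩
  simp only [Set.mem_insert_iff, Set.mem_singleton_iff, tdist, Prod.mk.injEq]
  by_cases hxy : x = y
  · subst hxy; left; exact ⟨ddist_self x, ddist_self x⟩
  by_cases haxy : A x y
  · rcases F2 x y haxy with h2 | h3
    · exact Or.inr (Or.inl ⟨F1 x y haxy, h2⟩)
    · exact Or.inr (Or.inr (Or.inr (Or.inl ⟨F1 x y haxy, h3⟩)))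
  by_cases hayx : A y x
  · rcases F2 y x hayx with h2 | h3
    · exact Or.inr (Or.inr (Or.inl ⟨h2, F1 y x hayx⟩))
    · exact Or.inr (Or.inr (Or.inr (Or.inr (Or.inl ⟨h3, F1 y x hayx⟩))))
  -- non-adjacent: same part
  have hf : f x = f y := by
    by_contra hne
    rcases (hadj x y hxy).mpr hne with h1 | h1
    · exact haxy h1
    · exact hayx h1
  have ha2 : 2 ≤ ddist A x y := by
    rcases Nat.lt_or_ge (ddist A x y) 2 with hlt | hge
    · interval_cases hd : (ddist A x y)
      · exact absurd (ddist_eq_zero hsc hd) hxy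
      · exact absurd ((ddist_one_iff hsc hirr).mp hd) haxy
    · exact hge
  have hb2 : 2 ≤ ddist A y x := by
    rcases Nat.lt_or_ge (ddist A y x) 2 with hlt | hge
    · interval_cases hd : (ddist A y x)
      · exact absurd (ddist_eq_zero hsc hd).symm hxy
      · exact absurd ((ddist_one_iff hsc hirr).mp hd) hayx
    · exact hge
  -- rule out (2, ≥3) and (≥3, 2)
  have no23 : ∀ u v : V, f u = f v → ¬ (ddist A u v = 2 ∧ 3 ≤ ddist A v u) := by
    rintro u v hfuv ⟨h2, h3⟩
    obtain ⟨w, huw, hwv⟩ := ddist_two hsc h2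
    have heq := keyeq u v hfuv h3
    have : w ∈ {z : V | A v z} := by rw [heq]; exact huw
    exact F3 w v hwv this
  rcases Nat.lt_or_ge (ddist A x y) 3 with ha | ha
  · have ha' : ddist A x y = 2 := by omega
    rcases Nat.lt_or_ge (ddist A y x) 3 with hb | hb
    · have hb' : ddist A y x = 2 := by omega
      exact Or.inr (Or.inr (Or.inr (Or.inr (Or.inr (Or.inl ⟨ha', hb'⟩)))))
    · exact absurd ⟨ha', hb⟩ (no23 x y hf)
  · rcases Nat.lt_or_ge (ddist A y x) 3 with hb | hb
    · have hb' : ddist A y x = 2 := by omega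
      exact absurd ⟨hb', ha⟩ (no23 y x hf.symm)
    · -- both ≥ 3: show both = 3
      have heq1 := keyeq x y hf hb
      have heq2 := keyeq y x hf.symm ha
      have hxy3 : ddist A x y = 3 := by
        obtain ⟨z, hz⟩ := F5 y
        have h1 : ddist A y z = 1 := congrArg Prod.fst hz
        have h2 : ddist A z y = 2 := congrArg Prod.snd hz
        have hyz : A y z := (ddist_one_iff hsc hirr).mp h1
        have hxz : A x z := by
          have : z ∈ {z : V | A x z} := by rw [← heq1]; exact hyz
          exact this
        have := ddist_triangle hsc x z y
        rw [F1 x z hxz, h2] at this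
        omega
      have hyx3 : ddist A y x = 3 := by
        obtain ⟨z, hz⟩ := F5 x
        have h1 : ddist A x z = 1 := congrArg Prod.fst hz
        have h2 : ddist A z x = 2 := congrArg Prod.snd hz
        have hxz : A x z := (ddist_one_iff hsc hirr).mp h1
        have hyz : A y z := by
          have : z ∈ {z : V | A y z} := by rw [← heq2]; exact hxz
          exact this
        have := ddist_triangle hsc y z x
        rw [F1 y z hyz, h2] at this
        omega
      exact Or.inr (Or.inr (Or.inr (Or.inr (Or.inr (Or.inr ⟨hxy3, hyx3⟩)))))

end Paper
end

section
/- Let Γ be a semicomplete multipartite commutative weakly distance-regular digraph with T={2,3}, where T={q : (1,q−1)∈∂̃(Γ)}. Then ∂̃(Γ)={(0,0),(1,1),(1,2),(2,1),(2,2)}. -/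
open Set Matrix

namespace Paper

variable {V : Type*} {W : Type*}

section Aux

variable {A : V → V → Prop} {x y z : V}

lemma aux_hasPath_zero (A : V → V → Prop) (x : V) : HasPathOfLength A x x 0 :=
  ⟨fun _ => x, rfl, rfl, fun i hi => absurd hi (by omega)⟩

lemma aux_hasPath_one (h : A x y) : HasPathOfLength A x y 1 :=
  ⟨fun n => if n = 0 then x else y, by simp, by simp, by
    intro i hi
    interval_cases i
    simpa using h⟩

lemma aux_hasPath_two (h1 : A x z) (h2 : A z y) : HasPathOfLength A x y 2 :=
  ⟨fun n => if n = 0 then x else if n = 1 then z else y, by simp, by simp, by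
    intro i hi
    interval_cases i <;> simpa using (by first | exact h1 | exact h2)⟩

lemma aux_eq_of_hasPath_zero (h : HasPathOfLength A x y 0) : x = y := by
  obtain ⟨p, h0, hn, -⟩ := h
  rw [← h0]; exact hn

lemma aux_arc_of_hasPath_one (h : HasPathOfLength A x y 1) : A x y := by
  obtain ⟨p, h0, hn, ha⟩ := h
  have := ha 0 (by norm_num)
  simp only [zero_add] at this
  rwa [h0, hn] at this

lemma aux_twopath_of_hasPath_two (h : HasPathOfLength A x y 2) : ∃ z, A x z ∧ A z y := by
  obtain ⟨p, h0, hn, ha⟩ := h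
  refine ⟨p 1, ?_, ?_⟩
  · have := ha 0 (by norm_num)
    simp only [zero_add] at this
    rwa [h0] at this
  · have := ha 1 (by norm_num)
    rwa [show (1 : ℕ) + 1 = 2 from rfl, hn] at this

lemma aux_ddist_self (A : V → V → Prop) (x : V) : ddist A x x = 0 :=
  Nat.le_antisymm (Nat.sInf_le (aux_hasPath_zero A x)) (Nat.zero_le _)

lemma aux_tdist_eq_mk {a b : ℕ} :
    tdist A x y = (a, b) ↔ ddist A x y = a ∧ ddist A y x = b := by
  rw [tdist, Prod.mk.injEq]

lemma aux_arc_of_ddist_eq_one (h : ddist A x y = 1) : A x y := by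
  have hne : {n | HasPathOfLength A x y n}.Nonempty := by
    by_contra hc
    rw [Set.not_nonempty_iff_eq_empty] at hc
    rw [ddist, hc] at h
    simp at h
  have hmem := Nat.sInf_mem hne
  rw [show sInf {n | HasPathOfLength A x y n} = ddist A x y from rfl, h] at hmem
  exact aux_arc_of_hasPath_one hmem

lemma aux_tdist_self (A : V → V → Prop) (x : V) : tdist A x x = ((0 : ℕ), (0 : ℕ)) :=
  aux_tdist_eq_mk.mpr ⟨aux_ddist_self A x, aux_ddist_self A x⟩

lemma aux_ddist_eq_one (hirr : ∀ v, ¬ A v v) (h : A x y) : ddist A x y = 1 := by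
  have hle : ddist A x y ≤ 1 := Nat.sInf_le (aux_hasPath_one h)
  have hmem := Nat.sInf_mem (⟨1, aux_hasPath_one h⟩ :
    {n | HasPathOfLength A x y n}.Nonempty)
  rcases Nat.le_one_iff_eq_zero_or_eq_one.mp hle with h0 | h1
  · exfalso
    rw [show sInf {n | HasPathOfLength A x y n} = ddist A x y from rfl, h0] at hmem
    have hxy := aux_eq_of_hasPath_zero hmem
    subst hxy
    exact hirr x h
  · exact h1

end Aux

/-- if `T = {2,3}` then `∂̃(Γ) = {(0,0),(1,1),(1,2),(2,1),(2,2)}`. -/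
theorem statement_18 {V : Type*} [Fintype V] [Nonempty V] (A : V → V → Prop)
    (hsm : IsSemicompleteMultipartite A) (h : IsCWDRD A)
    (hT : {q : ℕ | (1, q - 1) ∈ tdistSet A} = {2, 3}) :
    tdistSet A = {((0 : ℕ), (0 : ℕ)), (1, 1), (1, 2), (2, 1), (2, 2)} := by
  classical
  obtain ⟨m, hm2, f, hirr, hsize, hadj⟩ := hsm
  obtain ⟨⟨-, -, hwdr⟩, -⟩ := h
  -- constancy of sphere sizes
  have kconst : ∀ (i : ℕ × ℕ) (x y : V),
      {z | tdist A x z = i}.ncard = {z | tdist A y z = i}.ncard := by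
    intro i x y
    have hset : ∀ u : V,
        {z | tdist A u z = i} = {z | tdist A u z = i ∧ tdist A z u = (i.2, i.1)} := by
      intro u
      ext z
      simp only [mem_setOf_eq]
      refine ⟨fun hz => ⟨hz, ?_⟩, fun hz => hz.1⟩
      rw [← hz]
      rfl
    rw [hset x, hset y]
    exact hwdr i (i.2, i.1) x x y y (by rw [aux_tdist_self, aux_tdist_self])
  -- every arc has return distance 1 or 2
  have arc12 : ∀ u v : V, A u v → ddist A v u = 1 ∨ ddist A v u = 2 := by
    intro u v huv
    have h1 : ddist A u v = 1 := aux_ddist_eq_one hirr huv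
    have hmem : ((1 : ℕ), ddist A v u) ∈ tdistSet A :=
      ⟨u, v, by rw [aux_tdist_eq_mk]; exact ⟨h1, rfl⟩⟩
    have h2 : ddist A v u + 1 ∈ {q : ℕ | (1, q - 1) ∈ tdistSet A} := by
      simp only [mem_setOf_eq, Nat.add_sub_cancel]
      exact hmem
    rw [hT] at h2
    simp only [mem_insert_iff, mem_singleton_iff] at h2
    omega
  have tdist_both : ∀ u v : V, A u v → A v u → tdist A u v = (1, 1) := by
    intro u v h1 h2
    rw [aux_tdist_eq_mk]
    exact ⟨aux_ddist_eq_one hirr h1, aux_ddist_eq_one hirr h2⟩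
  have tdist_only : ∀ u v : V, A u v → ¬ A v u → tdist A u v = (1, 2) := by
    intro u v h1 h2
    rw [aux_tdist_eq_mk]
    refine ⟨aux_ddist_eq_one hirr h1, ?_⟩
    rcases arc12 u v h1 with hd | hd
    · exact absurd (aux_arc_of_ddist_eq_one hd) h2
    · exact hd
  -- (1,1) and (1,2) occur
  have h11 : ((1 : ℕ), (1 : ℕ)) ∈ tdistSet A := by
    have h2T : (2 : ℕ) ∈ {q : ℕ | (1, q - 1) ∈ tdistSet A} := by rw [hT]; simp
    simpa using h2T
  have h12 : ((1 : ℕ), (2 : ℕ)) ∈ tdistSet A := by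
    have h3T : (3 : ℕ) ∈ {q : ℕ | (1, q - 1) ∈ tdistSet A} := by rw [hT]; simp
    simpa using h3T
  -- key counting lemma
  have key2 : ∀ x y : V, x ≠ y → f x = f y → ∃ z, A x z ∧ A z y := by
    intro x y hxy hfxy
    by_contra hno
    push_neg at hno
    have hOut : {z | A x z} =
        {z | tdist A x z = ((1 : ℕ), (1 : ℕ))} ∪ {z | tdist A x z = (1, 2)} := by
      ext z
      simp only [mem_setOf_eq, mem_union]
      constructor
      · intro hz
        rcases arc12 x z hz with hd | hd
        · exact Or.inl (aux_tdist_eq_mk.mpr ⟨aux_ddist_eq_one hirr hz, hd⟩)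
        · exact Or.inr (aux_tdist_eq_mk.mpr ⟨aux_ddist_eq_one hirr hz, hd⟩)
      · rintro (hz | hz) <;> exact aux_arc_of_ddist_eq_one (aux_tdist_eq_mk.mp hz).1
    have hIn : {z | A z y} =
        {z | tdist A y z = ((1 : ℕ), (1 : ℕ))} ∪ {z | tdist A y z = (2, 1)} := by
      ext z
      simp only [mem_setOf_eq, mem_union]
      constructor
      · intro hz
        rcases arc12 z y hz with hd | hd
        · exact Or.inl (aux_tdist_eq_mk.mpr ⟨hd, aux_ddist_eq_one hirr hz⟩)
        · exact Or.inr (aux_tdist_eq_mk.mpr ⟨hd, aux_ddist_eq_one hirr hz⟩)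
      · rintro (hz | hz) <;> exact aux_arc_of_ddist_eq_one (aux_tdist_eq_mk.mp hz).2
    have hInX : {z | A z x} =
        {z | tdist A x z = ((1 : ℕ), (1 : ℕ))} ∪ {z | tdist A x z = (2, 1)} := by
      ext z
      simp only [mem_setOf_eq, mem_union]
      constructor
      · intro hz
        rcases arc12 z x hz with hd | hd
        · exact Or.inl (aux_tdist_eq_mk.mpr ⟨hd, aux_ddist_eq_one hirr hz⟩)
        · exact Or.inr (aux_tdist_eq_mk.mpr ⟨hd, aux_ddist_eq_one hirr hz⟩)
      · rintro (hz | hz) <;> exact aux_arc_of_ddist_eq_one (aux_tdist_eq_mk.mp hz).2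
    have hUnion : {z | A x z} ∪ {z | A z x} = {z | f z ≠ f x} := by
      ext z
      simp only [mem_setOf_eq, mem_union]
      constructor
      · intro hz
        have hzx : x ≠ z := by
          rintro rfl
          rcases hz with hz | hz <;> exact hirr x hz
        exact fun hf => (hadj x z hzx).mp hz hf.symm
      · intro hz
        have hzx : x ≠ z := by rintro rfl; exact hz rfl
        exact (hadj x z hzx).mpr (fun hf => hz hf.symm)
    have hInSub : {z | A z y} ⊆ {z | f z ≠ f x} := by
      intro z hz
      have hzy : z ≠ y := by rintro rfl; exact hirr z hz
      have := (hadj z y hzy).mp (Or.inl hz)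
      rw [← hfxy] at this
      exact this
    have hInterX : {z | A x z} ∩ {z | A z x} =
        {z | tdist A x z = ((1 : ℕ), (1 : ℕ))} := by
      ext z
      simp only [mem_setOf_eq, mem_inter_iff]
      constructor
      · rintro ⟨h1, h2⟩
        exact tdist_both x z h1 h2
      · intro hz
        exact ⟨aux_arc_of_ddist_eq_one (aux_tdist_eq_mk.mp hz).1,
          aux_arc_of_ddist_eq_one (aux_tdist_eq_mk.mp hz).2⟩
    have hdisjOI : Disjoint {z | A x z} {z | A z y} := by
      rw [Set.disjoint_left]
      intro z h1 h2
      exact hno z h1 h2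
    have hd1 : Disjoint {z | tdist A x z = ((1 : ℕ), (1 : ℕ))} {z | tdist A x z = (1, 2)} := by
      rw [Set.disjoint_left]
      intro z h1 h2
      simp only [mem_setOf_eq] at h1 h2
      rw [h1] at h2
      exact absurd h2 (by decide)
    have hd2 : Disjoint {z | tdist A y z = ((1 : ℕ), (1 : ℕ))} {z | tdist A y z = (2, 1)} := by
      rw [Set.disjoint_left]
      intro z h1 h2
      simp only [mem_setOf_eq] at h1 h2
      rw [h1] at h2
      exact absurd h2 (by decide)
    set a := {z | tdist A x z = ((1 : ℕ), (1 : ℕ))}.ncard with ha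
    set b := {z | tdist A x z = ((1 : ℕ), (2 : ℕ))}.ncard with hb
    set c := {z | tdist A x z = ((2 : ℕ), (1 : ℕ))}.ncard with hc
    have hay : {z | tdist A y z = ((1 : ℕ), (1 : ℕ))}.ncard = a := kconst _ y x
    have hcy : {z | tdist A y z = ((2 : ℕ), (1 : ℕ))}.ncard = c := kconst _ y x
    have hcardOut : {z | A x z}.ncard = a + b := by
      rw [hOut, Set.ncard_union_eq hd1 (toFinite _) (toFinite _)]
    have hcardIn : {z | A z y}.ncard = a + c := by
      rw [hIn, Set.ncard_union_eq hd2 (toFinite _) (toFinite _), hay, hcy]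
    have hcardBig : {z | f z ≠ f x}.ncard = a + b + c := by
      rw [← hUnion]
      have := Set.ncard_union_add_ncard_inter {z | A x z} {z | A z x}
        (toFinite _) (toFinite _)
      rw [hInterX, hcardOut] at this
      have hcardInX : {z | A z x}.ncard = a + c := by
        rw [hInX, Set.ncard_union_eq (by
          rw [Set.disjoint_left]
          intro z h1 h2
          simp only [mem_setOf_eq] at h1 h2
          rw [h1] at h2
          exact absurd h2 (by decide)) (toFinite _) (toFinite _)]
      rw [hcardInX] at this
      omega
    have hsub : {z | A x z} ∪ {z | A z y} ⊆ {z | f z ≠ f x} := by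
      apply Set.union_subset
      · rw [← hUnion]; exact Set.subset_union_left
      · exact hInSub
    have hle : {z | A x z}.ncard + {z | A z y}.ncard ≤ a + b + c := by
      rw [← Set.ncard_union_eq hdisjOI (toFinite _) (toFinite _), ← hcardBig]
      exact Set.ncard_le_ncard hsub (toFinite _)
    have ha0 : a = 0 := by omega
    -- but (1,1) occurs, so a ≥ 1
    obtain ⟨u, v, huv⟩ := h11
    have hpos : 0 < {z | tdist A u z = ((1 : ℕ), (1 : ℕ))}.ncard :=
      (Set.ncard_pos (toFinite _)).mpr ⟨v, huv⟩
    rw [kconst _ u x] at hpos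
    omega
  -- same part, distinct ⇒ distance 2
  have dd2 : ∀ x y : V, x ≠ y → f x = f y → ddist A x y = 2 := by
    intro x y hxy hf
    obtain ⟨z, h1, h2⟩ := key2 x y hxy hf
    have hle : ddist A x y ≤ 2 := Nat.sInf_le (aux_hasPath_two h1 h2)
    have hmem := Nat.sInf_mem (⟨2, aux_hasPath_two h1 h2⟩ :
      {n | HasPathOfLength A x y n}.Nonempty)
    have hmem' : HasPathOfLength A x y (ddist A x y) := hmem
    have hnA : ¬ A x y := fun hA => (hadj x y hxy).mp (Or.inl hA) hf
    have h0 : ddist A x y ≠ 0 := fun hh => hxy (aux_eq_of_hasPath_zero (hh ▸ hmem'))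
    have h1' : ddist A x y ≠ 1 := fun hh => hnA (aux_arc_of_hasPath_one (hh ▸ hmem'))
    omega
  -- assemble
  ext d
  simp only [tdistSet, mem_setOf_eq, mem_insert_iff, mem_singleton_iff]
  constructor
  · rintro ⟨x, y, rfl⟩
    by_cases hxy : x = y
    · subst hxy
      exact Or.inl (aux_tdist_eq_mk.mpr ⟨aux_ddist_self A x, aux_ddist_self A x⟩)
    · by_cases hf : f x = f y
      · exact Or.inr (Or.inr (Or.inr (Or.inr
          (aux_tdist_eq_mk.mpr ⟨dd2 x y hxy hf, dd2 y x (Ne.symm hxy) hf.symm⟩))))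
      · have harc := (hadj x y hxy).mpr hf
        by_cases hxy' : A x y
        · by_cases hyx : A y x
          · exact Or.inr (Or.inl (tdist_both x y hxy' hyx))
          · exact Or.inr (Or.inr (Or.inl (tdist_only x y hxy' hyx)))
        · have hyx : A y x := harc.resolve_left hxy'
          have hsw := aux_tdist_eq_mk.mp (tdist_only y x hyx hxy')
          exact Or.inr (Or.inr (Or.inr (Or.inl
            (aux_tdist_eq_mk.mpr ⟨hsw.2, hsw.1⟩))))
  · intro hd
    rcases hd with rfl | rfl | rfl | rfl | rfl
    · refine ⟨Classical.arbitrary V, Classical.arbitrary V, ?_⟩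
      exact aux_tdist_eq_mk.mpr ⟨aux_ddist_self A _, aux_ddist_self A _⟩
    · exact h11
    · exact h12
    · obtain ⟨u, v, huv⟩ := h12
      have hsw := aux_tdist_eq_mk.mp huv
      exact ⟨v, u, aux_tdist_eq_mk.mpr ⟨hsw.2, hsw.1⟩⟩
    · have i : Fin m := ⟨0, by omega⟩
      have h2i : 1 < {x | f x = i}.ncard := hsize i
      obtain ⟨u, v, hu, hv, huv⟩ := (Set.one_lt_ncard_iff (toFinite _)).mp h2i
      refine ⟨u, v, aux_tdist_eq_mk.mpr ⟨dd2 u v huv ?_, dd2 v u (Ne.symm huv) ?_⟩⟩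
      · rw [hu, hv]
      · rw [hv, hu]

end Paper
end
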